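/- For fixed prime p, positive integer d coprime to p, and 1 ≤ i ≤ p−1, there exists N such that σ_p(d, i, n) = 0 for all n ≥ N; consequently ⌊id/p⌋ − ⌊id/p^{n+1}⌋ − σ_p(d,i,n) = ⌊id/p⌋ for all sufficiently large n. -/

import Mathlib

/-!
A counted `l` has the form `l = m + 1` with `0 < m < id`, and its `c` satisfies
`d·c ≡ -m (mod p^n)`. If the base-`p` digits of `c` in positions `e, …, e+k-1` (with `e + k ≤ n`)
all vanished, then `a := c mod p^(e+k)` would satisfy `a < p^e` and `p^(e+k) ∣ d·a + m ≠ 0`, hence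
`p^(e+k) ≤ d·a + m < p^e (d + m)`, impossible once `d + m < p^k`. So every block of `k` digits of
`c` contributes at least `1` to its digit sum, and `p - 1` blocks already exceed `p - 1 - i`.
-/

/-- `sigmaP p d i n` is the number of integers `0 < l ≤ ⌈id/p⌉` with `l ≢ 1 (mod p^n)` such
that the first `n` digits of the `p`-adic expansion of `(1-l)/d ∈ ℤ_p` sum to at most
`p - 1 - i`. The integer `c` formed by these first `n` digits is characterized by
`0 ≤ c < p^n` and `d·c ≡ 1 - l (mod p^n)` (this uses `p ∤ d`). -/
noncomputable def sigmaP (p d i n : ℕ) : ℕ :=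
  Nat.card {l : ℤ // 0 < l ∧ l ≤ ⌈(i * d : ℚ) / p⌉ ∧ ¬ ((p : ℤ) ^ n ∣ l - 1) ∧
    ∃ c : ℕ, c < p ^ n ∧ (p : ℤ) ^ n ∣ ((d : ℤ) * c - (1 - l)) ∧
      (Nat.digits p c).sum ≤ p - 1 - i}

namespace Nat

theorem one_le_digits_sum {b x : ℕ} (hx : x ≠ 0) : 1 ≤ (b.digits x).sum := by
  have hne := (digits_ne_nil_iff_ne_zero (b := b)).mpr hx
  have hlast := getLast_digit_ne_zero b hx
  have := List.le_sum_of_mem (List.getLast_mem hne)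
  omega

theorem digits_sum_eq_mod_pow_add_div_pow {b : ℕ} (hb : 1 < b) (k x : ℕ) :
    (b.digits x).sum = (b.digits (x % b ^ k)).sum + (b.digits (x / b ^ k)).sum := by
  rcases (x / b ^ k).eq_zero_or_pos with h | h
  · rw [h, mod_eq_of_lt ((div_eq_zero_iff_lt (by positivity)).1 h)]
    simp
  · have hlen := (digits_length_le_iff hb _).2 (mod_lt x (by positivity : 0 < b ^ k))
    have happ := digits_append_zeroes_append_digits (k := k - (b.digits (x % b ^ k)).length)
      (n := x % b ^ k) hb h
    rw [Nat.add_sub_cancel' hlen, mod_add_div] at happ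
    simp [← happ]

theorem le_digits_sum_of_div_pow_mod_pow_ne_zero {b : ℕ} (hb : 1 < b) {k J x : ℕ}
    (h : ∀ j < J, x / b ^ (j * k) % b ^ k ≠ 0) : J ≤ (b.digits x).sum := by
  induction J generalizing x with
  | zero => exact Nat.zero_le _
  | succ J ih =>
    have hlow : 1 ≤ (b.digits (x % b ^ k)).sum :=
      one_le_digits_sum (by simpa using h 0 J.succ_pos)
    have hhigh : J ≤ (b.digits (x / b ^ k)).sum := ih fun j hj => by
      rw [Nat.div_div_eq_div_mul, ← pow_add, add_comm, ← succ_mul]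
      exact h (j + 1) (by omega)
    rw [digits_sum_eq_mod_pow_add_div_pow hb k x]
    omega

end Nat

theorem div_pow_mod_pow_ne_zero_of_pow_dvd_mul_add {p d m c e k : ℕ} (hm : 0 < m)
    (hk : d + m < p ^ k) (h : p ^ (e + k) ∣ d * c + m) : c / p ^ e % p ^ k ≠ 0 := by
  intro hblock
  have hp : 0 < p := by
    rcases Nat.pow_pos_iff.1 (show 0 < p ^ k by omega) with hp | rfl
    · exact hp
    · rw [pow_zero] at hk
      omega
  have hpe : 0 < p ^ e := pow_pos hp e
  set a := c % p ^ (e + k) with ha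
  have ha_lt : a < p ^ e := by
    rw [ha, pow_add, Nat.mod_mul, hblock, mul_zero, add_zero]
    exact Nat.mod_lt c hpe
  have hdvd : p ^ (e + k) ∣ d * a + m :=
    ((((Nat.mod_modEq c _).mul_left d).add_right m).dvd_iff dvd_rfl).2 h
  have hle := Nat.le_of_dvd (by omega) hdvd
  have hlt : d * a + m < p ^ e * p ^ k :=
    calc d * a + m ≤ d * p ^ e + m * p ^ e :=
          add_le_add (Nat.mul_le_mul_left d ha_lt.le) (Nat.le_mul_of_pos_right m hpe)
      _ = p ^ e * (d + m) := by ring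
      _ < p ^ e * p ^ k := Nat.mul_lt_mul_of_pos_left hk hpe
  rw [pow_add] at hle
  omega

theorem le_digits_sum_of_pow_dvd_mul_add {p d m c k J n : ℕ} (hp : 1 < p) (hm : 0 < m)
    (hk : d + m < p ^ k) (hn : J * k ≤ n) (h : p ^ n ∣ d * c + m) : J ≤ (p.digits c).sum :=
  Nat.le_digits_sum_of_div_pow_mod_pow_ne_zero hp fun j hj =>
    div_pow_mod_pow_ne_zero_of_pow_dvd_mul_add hm hk <|
      (pow_dvd_pow p ((Nat.succ_mul j k).symm.trans_le
        ((Nat.mul_le_mul_right k hj).trans hn))).trans h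

theorem sigmaP_eq_zero {p d i k n : ℕ} (hp : 1 < p) (hi : 1 ≤ i) (hk : d + i * d < p ^ k)
    (hn : (p - 1) * k ≤ n) : sigmaP p d i n = 0 := by
  rw [sigmaP, Nat.card_eq_zero]
  left
  rw [isEmpty_subtype]
  rintro l ⟨hl0, hl_le, hl_ne, c, -, hdvd, hsum⟩
  obtain ⟨m, rfl⟩ : ∃ m : ℕ, l = m + 1 := ⟨(l - 1).toNat, by omega⟩
  have hm : 0 < m := Nat.pos_of_ne_zero (by rintro rfl; simp at hl_ne)
  have hceil : ⌈(i * d : ℚ) / p⌉ ≤ i * d :=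
    Int.ceil_le.2 (by push_cast; exact div_le_self (by positivity) (by exact_mod_cast hp.le))
  have hdvd_nat : p ^ n ∣ d * c + m := by
    exact_mod_cast (show ((p : ℤ) ^ n) ∣ d * c + m by convert hdvd using 1; ring)
  have := le_digits_sum_of_pow_dvd_mul_add hp hm (by omega) hn hdvd_nat
  omega

theorem sigmaP_eventually_zero_general (p d i : ℕ) (hi1 : 1 ≤ i) (hi2 : i ≤ p - 1) :
    ∃ N : ℕ, ∀ n : ℕ, N ≤ n → sigmaP p d i n = 0 ∧
      ⌊(i * d : ℚ) / p⌋ - ⌊(i * d : ℚ) / (p : ℚ) ^ (n + 1)⌋ - (sigmaP p d i n : ℤ)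
        = ⌊(i * d : ℚ) / p⌋ := by
  have hp : 1 < p := by omega
  refine ⟨(p - 1) * (d + i * d), fun n hn => ?_⟩
  have hσ := sigmaP_eq_zero hp hi1 (Nat.lt_pow_self hp) hn
  have hid : i * d < p ^ (n + 1) :=
    calc i * d ≤ n := by have := Nat.le_mul_of_pos_left (d + i * d) (by omega : 0 < p - 1); omega
      _ < p ^ (n + 1) := n.lt_succ_self.trans (Nat.lt_pow_self hp)
  have hfloor : ⌊(i * d : ℚ) / (p : ℚ) ^ (n + 1)⌋ = 0 :=
    Int.floor_eq_zero_iff.2 ⟨by positivity, (div_lt_one (by positivity)).2 (by exact_mod_cast hid)⟩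
  exact ⟨hσ, by rw [hσ, hfloor]; simp⟩

/-- for fixed prime `p`, `d > 0` coprime to `p`, and `1 ≤ i ≤ p-1`, there is
`N` with `σ_p(d,i,n) = 0` for all `n ≥ N`; consequently
`⌊id/p⌋ - ⌊id/p^{n+1}⌋ - σ_p(d,i,n) = ⌊id/p⌋` for all sufficiently large `n`. -/
theorem sigmaP_eventually_zero (p d i : ℕ) (hp : p.Prime) (hd : 0 < d) (hpd : ¬ p ∣ d)
    (hi1 : 1 ≤ i) (hi2 : i ≤ p - 1) :
    ∃ N : ℕ, ∀ n : ℕ, N ≤ n → sigmaP p d i n = 0 ∧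
      ⌊(i * d : ℚ) / p⌋ - ⌊(i * d : ℚ) / (p : ℚ) ^ (n + 1)⌋ - (sigmaP p d i n : ℤ)
        = ⌊(i * d : ℚ) / p⌋ :=
  sigmaP_eventually_zero_general p d i hi1 hi2
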